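/- Let p be an odd prime, n a positive integer with ν := ν_p(n), and t a nonnegative integer. For every commutative ring R and every formal power series f = Σ_{k≥0} a(k)qᵏ over R, the coefficient of qⁿ in (U_p + V_p)^t f equals Σ_{i = −ν}^{t} c_{p,t,i}(n) · a(p^i n), where the sum is over integers i with −ν ≤ i ≤ t (only terms with i ≡ t (mod 2) are nonzero). -/

import Mathlib

/-!
Write `n = pᵛ m` with `p ∤ m`. Along the chain `pᵏ m` the operator `U_p + V_p` acts as a walk on
`k ≥ 0`: the coefficient at `pᵏ m` of `(U_p + V_p) g` is `g(pᵏ⁺¹ m) + g(pᵏ⁻¹ m)`, the second term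
being absent for `k = 0` since `p ∤ m`. In the index `i = k - ν`, `c_{p,t,i}(n)` counts the walks
of length `t` from `0` to `i` that never go below `-ν`, and the formula follows by induction on `t`.
-/

/-- `U_p f := Σ a(pk) qᵏ`. -/
noncomputable def Uop (R : Type*) [CommRing R] (p : ℕ) (f : PowerSeries R) : PowerSeries R :=
  PowerSeries.mk fun k => PowerSeries.coeff (p * k) f

/-- `V_p f := Σ a(k) q^{pk}`. -/
noncomputable def Vop (R : Type*) [CommRing R] (p : ℕ) (f : PowerSeries R) : PowerSeries R :=
  PowerSeries.mk fun k => if p ∣ k then PowerSeries.coeff (k / p) f else 0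

/-- The coefficients `c_{p,t,i}(n)`, depending only on `ν := ν_p(n)`. -/
def crec (ν : ℕ) : ℕ → ℤ → ℤ
  | 0, i => if i = 0 then 1 else 0
  | t + 1, i =>
    if ((t : ℤ) + 1 < i) ∨ (i < max (-(ν : ℤ)) (-((t : ℤ) + 1))) then 0
    else crec ν t (i - 1) + crec ν t (i + 1)

/-- `p^i · n` for `i ∈ ℤ` (exact division when `i < 0` and `p^{−i} ∣ n`). -/
def pPow (p n : ℕ) (i : ℤ) : ℕ := p ^ i.toNat * n / p ^ (-i).toNat

open PowerSeries Finset

section crec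

variable (ν : ℕ)

lemma crec_eq_zero {t : ℕ} {i : ℤ} (h : (t : ℤ) < i ∨ i < max (-(ν : ℤ)) (-(t : ℤ))) :
    crec ν t i = 0 := by
  cases t with
  | zero => simp only [crec]; rw [if_neg]; omega
  | succ t => rw [crec, if_pos]; push_cast at h ⊢; omega

lemma crec_succ (t : ℕ) {i : ℤ} (hi : -(ν : ℤ) ≤ i) :
    crec ν (t + 1) i = crec ν t (i - 1) + crec ν t (i + 1) := by
  rw [crec]
  split_ifs with h
  · rw [crec_eq_zero ν (by omega), crec_eq_zero ν (by omega), add_zero]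
  · rfl

variable {M : Type*} [AddCommGroup M]

lemma sum_crec_zero (F : ℤ → M) : ∑ i ∈ Icc (-(ν : ℤ)) 0, crec ν 0 i • F i = F 0 := by
  rw [sum_eq_single_of_mem 0 (by simp)]
  · simp [crec]
  · intro i _ hi
    simp [crec, hi]

lemma sum_Icc_shift (a b c : ℤ) (F : ℤ → M) :
    ∑ i ∈ Icc a b, F (i + c) = ∑ j ∈ Icc (a + c) (b + c), F j := by
  rw [← map_add_right_Icc, sum_map]
  rfl

lemma sum_crec_sub_one_smul (t : ℕ) (F : ℤ → M) :
    ∑ i ∈ Icc (-(ν : ℤ)) (t + 1), crec ν t (i - 1) • F i =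
      ∑ i ∈ Icc (-(ν : ℤ)) t, crec ν t i • F (i + 1) := by
  have hshift := sum_Icc_shift (-(ν : ℤ) - 1) t 1 fun j => crec ν t (j - 1) • F j
  simp only [add_sub_cancel_right, sub_add_cancel] at hshift
  rw [← hshift]
  refine (sum_subset (Icc_subset_Icc (by omega) le_rfl) fun i hi hi' => ?_).symm
  simp only [mem_Icc] at hi hi'
  rw [crec_eq_zero ν (by omega), zero_smul]

lemma sum_crec_add_one_smul (t : ℕ) (F : ℤ → M) :
    ∑ i ∈ Icc (-(ν : ℤ)) (t + 1), crec ν t (i + 1) • F i =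
      ∑ i ∈ Icc (-(ν : ℤ)) t, crec ν t i • if i = -(ν : ℤ) then 0 else F (i - 1) := by
  have hshift := sum_Icc_shift (-(ν : ℤ) - 1) (t + 1) 1
    fun j => crec ν t j • if j = -(ν : ℤ) then 0 else F (j - 1)
  simp only [add_sub_cancel_right, sub_add_cancel] at hshift
  rw [sum_subset (Icc_subset_Icc le_rfl (by omega : (t : ℤ) ≤ t + 1 + 1)), ← hshift]
  · rw [← sum_subset (Icc_subset_Icc (by omega : -(ν : ℤ) - 1 ≤ -ν) le_rfl)]
    · refine sum_congr rfl fun i hi => ?_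
      simp only [mem_Icc] at hi
      rw [if_neg (by omega)]
    · intro i hi hi'
      simp only [mem_Icc] at hi hi'
      rw [if_pos (by omega), smul_zero]
  · intro i hi hi'
    simp only [mem_Icc] at hi hi'
    rw [crec_eq_zero ν (by omega), zero_smul]

lemma sum_crec_succ (t : ℕ) (F : ℤ → M) :
    ∑ i ∈ Icc (-(ν : ℤ)) (t + 1), crec ν (t + 1) i • F i =
      ∑ i ∈ Icc (-(ν : ℤ)) t,
        crec ν t i • (F (i + 1) + if i = -(ν : ℤ) then 0 else F (i - 1)) := by
  calc ∑ i ∈ Icc (-(ν : ℤ)) (t + 1), crec ν (t + 1) i • F i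
      = ∑ i ∈ Icc (-(ν : ℤ)) (t + 1), (crec ν t (i - 1) • F i + crec ν t (i + 1) • F i) :=
        sum_congr rfl fun i hi => by rw [crec_succ ν t (mem_Icc.mp hi).1, add_smul]
    _ = _ := by
        rw [sum_add_distrib, sum_crec_sub_one_smul, sum_crec_add_one_smul, ← sum_add_distrib]
        simp only [smul_add]

end crec

section coeff

variable {R : Type*} [CommRing R] {p : ℕ}

lemma coeff_Uop (k : ℕ) (g : PowerSeries R) : coeff k (Uop R p g) = coeff (p * k) g := by
  simp [Uop]

lemma coeff_Vop_mul (hp : 0 < p) (k : ℕ) (g : PowerSeries R) :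
    coeff (p * k) (Vop R p g) = coeff k g := by
  simp [Vop, Nat.mul_div_cancel_left k hp]

lemma coeff_Vop_of_not_dvd {k : ℕ} (hk : ¬ p ∣ k) (g : PowerSeries R) :
    coeff k (Vop R p g) = 0 := by
  simp [Vop, hk]

lemma pPow_pow_mul (hp : 0 < p) (ν m k : ℕ) : pPow p (p ^ ν * m) (k - ν) = p ^ k * m := by
  rcases le_total ν k with h | h
  · obtain ⟨j, rfl⟩ := Nat.exists_eq_add_of_le h
    have hj : ((ν + j : ℕ) : ℤ) - ν = j := by push_cast; ring
    simp only [pPow, hj, Int.toNat_natCast, Int.toNat_neg_natCast, pow_zero, Nat.div_one]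
    ring
  · obtain ⟨j, rfl⟩ := Nat.exists_eq_add_of_le h
    have hj : (k : ℤ) - ((k + j : ℕ) : ℤ) = -j := by push_cast; ring
    simp only [pPow, hj, neg_neg, Int.toNat_natCast, Int.toNat_neg_natCast, pow_zero, one_mul]
    rw [pow_add, mul_right_comm, Nat.mul_div_cancel _ (pow_pos hp j)]

lemma coeff_pPow_Uop_add_Vop (hp : 0 < p) {m : ℕ} (hpm : ¬ p ∣ m) (ν : ℕ) (g : PowerSeries R)
    {i : ℤ} (hi : -(ν : ℤ) ≤ i) :
    coeff (pPow p (p ^ ν * m) i) (Uop R p g + Vop R p g) =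
      coeff (pPow p (p ^ ν * m) (i + 1)) g +
        if i = -(ν : ℤ) then 0 else coeff (pPow p (p ^ ν * m) (i - 1)) g := by
  obtain ⟨k, rfl⟩ : ∃ k : ℕ, i = k - ν := ⟨(i + ν).toNat, by omega⟩
  have hsucc : (k : ℤ) - ν + 1 = (k + 1 : ℕ) - ν := by push_cast; ring
  rw [hsucc, pPow_pow_mul hp, pPow_pow_mul hp, map_add, coeff_Uop, pow_succ', mul_assoc]
  cases k with
  | zero => simp [coeff_Vop_of_not_dvd hpm]
  | succ k =>
    have hpred : ((k + 1 : ℕ) : ℤ) - ν - 1 = k - ν := by push_cast; ring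
    rw [if_neg (by omega), hpred, pPow_pow_mul hp, pow_succ', mul_assoc, coeff_Vop_mul hp]

end coeff

theorem stmt12_general (p : ℕ) (hp : p.Prime) (n : ℕ) (hn : 0 < n) (t : ℕ)
    (R : Type*) [CommRing R] (f : PowerSeries R) :
    PowerSeries.coeff n ((fun g => Uop R p g + Vop R p g)^[t] f) =
      ∑ i ∈ Finset.Icc (-(padicValNat p n : ℤ)) (t : ℤ),
        crec (padicValNat p n) t i • PowerSeries.coeff (pPow p n i) f := by
  obtain ⟨m, hpm, hnm⟩ : ∃ m, ¬ p ∣ m ∧ n = p ^ padicValNat p n * m :=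
    ⟨ordCompl[p] n, Nat.not_dvd_ordCompl hp hn.ne',
      by rw [← Nat.factorization_def n hp, Nat.ordProj_mul_ordCompl_eq_self]⟩
  generalize padicValNat p n = ν at hnm ⊢
  subst hnm
  induction t generalizing f with
  | zero => rw [Nat.cast_zero, sum_crec_zero]; simp [pPow]
  | succ t ih =>
    rw [Function.iterate_succ_apply, ih, Nat.cast_succ, sum_crec_succ]
    refine sum_congr rfl fun i hi => ?_
    rw [coeff_pPow_Uop_add_Vop hp.pos hpm ν f (mem_Icc.mp hi).1]

/-- Equation (5.8): the coefficient of `qⁿ` in `(U_p + V_p)^t f` is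
`Σ_{−ν ≤ i ≤ t} c_{p,t,i}(n) · a(pⁱ n)`. -/
theorem stmt12 (p : ℕ) (hp : p.Prime) (hp2 : p ≠ 2) (n : ℕ) (hn : 0 < n) (t : ℕ)
    (R : Type*) [CommRing R] (f : PowerSeries R) :
    PowerSeries.coeff n ((fun g => Uop R p g + Vop R p g)^[t] f) =
      ∑ i ∈ Finset.Icc (-(padicValNat p n : ℤ)) (t : ℤ),
        crec (padicValNat p n) t i • PowerSeries.coeff (pPow p n i) f :=
  stmt12_general p hp n hn t R f
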